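/- arXiv:2210.06894 — 2 statements merged into one kernel-verified Lean document; each statement's English description precedes it below -/
import Mathlib

section
/- Let X^Clean ~ N(μ, σ²) and X^Backdoor = c' + Δ where c' is independent of X^Clean with c' ~ N(μ, σ²) and Δ ∈ ℝ, σ > 0. Then P(|X^Backdoor − μ| < |X^Clean − μ|) = 2·Φ(Δ/(√2 σ))·Φ(−Δ/(√2 σ)), where Φ is the standard normal CDF. -/
open MeasureTheory ProbabilityTheory Real Set
open scoped ENNReal NNReal

namespace SingleDimAux

/-- The 45°-rotation on `ℝ × ℝ`. -/
noncomputable def Lrot : (ℝ × ℝ) →ₗ[ℝ] (ℝ × ℝ) :=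
  Matrix.toLin (Module.Basis.finTwoProd ℝ) (Module.Basis.finTwoProd ℝ)
    !![(Real.sqrt 2)⁻¹, -(Real.sqrt 2)⁻¹; (Real.sqrt 2)⁻¹, (Real.sqrt 2)⁻¹]

lemma Lrot_apply (p : ℝ × ℝ) :
    Lrot p = ((Real.sqrt 2)⁻¹ * p.1 + -(Real.sqrt 2)⁻¹ * p.2,
              (Real.sqrt 2)⁻¹ * p.1 + (Real.sqrt 2)⁻¹ * p.2) := by
  simp [Lrot]

lemma sq_inv_sqrt2 : ((Real.sqrt 2)⁻¹) ^ 2 = 1 / 2 := by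
  rw [inv_pow, Real.sq_sqrt (by norm_num : (0:ℝ) ≤ 2)]
  norm_num

lemma Lrot_det : LinearMap.det Lrot = 1 := by
  rw [Lrot, LinearMap.det_toLin, Matrix.det_fin_two_of]
  linear_combination 2 * sq_inv_sqrt2

lemma Lrot_measurable : Measurable Lrot :=
  Lrot.continuous_of_finiteDimensional.measurable

lemma map_Lrot_volume :
    Measure.map Lrot ((volume : Measure ℝ).prod volume) = (volume : Measure ℝ).prod volume := by
  rw [Measure.map_linearMap_addHaar_eq_smul_addHaar _ (by rw [Lrot_det]; norm_num), Lrot_det]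
  simp

/-- joint density of two independent standard Gaussians -/
noncomputable def f2 : ℝ × ℝ → ℝ≥0∞ := fun p => gaussianPDF 0 1 p.1 * gaussianPDF 0 1 p.2

lemma f2_measurable : Measurable f2 :=
  ((measurable_gaussianPDF 0 1).comp measurable_fst).mul
    ((measurable_gaussianPDF 0 1).comp measurable_snd)

lemma f2_eq (p : ℝ × ℝ) :
    f2 p = ENNReal.ofReal
      (((Real.sqrt (2 * π))⁻¹) ^ 2 * Real.exp (-(p.1 ^ 2 + p.2 ^ 2) / 2)) := by
  simp only [f2, gaussianPDF]
  rw [← ENNReal.ofReal_mul (gaussianPDFReal_nonneg _ _ _)]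
  congr 1
  simp only [gaussianPDFReal, NNReal.coe_one, mul_one, sub_zero]
  rw [mul_mul_mul_comm, ← Real.exp_add,
    show (-p.1 ^ 2 / 2 + -p.2 ^ 2 / 2 : ℝ) = -(p.1 ^ 2 + p.2 ^ 2) / 2 from by ring]
  ring

lemma f2_Lrot (p : ℝ × ℝ) : f2 (Lrot p) = f2 p := by
  have h : ((Real.sqrt 2)⁻¹ * p.1 + -(Real.sqrt 2)⁻¹ * p.2) ^ 2 +
      ((Real.sqrt 2)⁻¹ * p.1 + (Real.sqrt 2)⁻¹ * p.2) ^ 2 = p.1 ^ 2 + p.2 ^ 2 := by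
    linear_combination (p.1 ^ 2 + p.2 ^ 2) * 2 * sq_inv_sqrt2
  rw [f2_eq, f2_eq, Lrot_apply]
  simp only
  rw [h]

lemma gamma_prod :
    (gaussianReal 0 1).prod (gaussianReal 0 1)
      = ((volume : Measure ℝ).prod volume).withDensity f2 := by
  refine Measure.prod_eq fun s t hs ht => ?_
  rw [withDensity_apply _ (hs.prod ht), ← Measure.prod_restrict]
  simp only [f2]
  rw [lintegral_prod_mul (measurable_gaussianPDF 0 1).aemeasurable
      (measurable_gaussianPDF 0 1).aemeasurable,
    gaussianReal_of_var_ne_zero 0 one_ne_zero, withDensity_apply _ hs, withDensity_apply _ ht]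

lemma gamma_prod_preimage {s : Set (ℝ × ℝ)} (hs : MeasurableSet s) :
    ((gaussianReal 0 1).prod (gaussianReal 0 1)) (Lrot ⁻¹' s)
      = ((gaussianReal 0 1).prod (gaussianReal 0 1)) s := by
  rw [gamma_prod, withDensity_apply _ (Lrot_measurable hs), withDensity_apply _ hs]
  calc ∫⁻ p in Lrot ⁻¹' s, f2 p ∂((volume : Measure ℝ).prod volume)
      = ∫⁻ p in Lrot ⁻¹' s, f2 (Lrot p) ∂((volume : Measure ℝ).prod volume) :=
        lintegral_congr fun p => (f2_Lrot p).symm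
    _ = ∫⁻ q in s, f2 q ∂(Measure.map Lrot ((volume : Measure ℝ).prod volume)) :=
        (setLIntegral_map hs f2_measurable Lrot_measurable).symm
    _ = ∫⁻ q in s, f2 q ∂((volume : Measure ℝ).prod volume) := by rw [map_Lrot_volume]

lemma gamma_singleton (x : ℝ) : gaussianReal 0 1 {x} = 0 :=
  gaussianReal_absolutelyContinuous 0 one_ne_zero (measure_singleton x)

lemma gamma_Iic (x : ℝ) : gaussianReal 0 1 (Iic x) = ENNReal.ofReal (cdf (gaussianReal 0 1) x) := by
  rw [cdf_eq_real, measureReal_def, ENNReal.ofReal_toReal (measure_ne_top _ _)]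

lemma gamma_Iio (x : ℝ) : gaussianReal 0 1 (Iio x) = ENNReal.ofReal (cdf (gaussianReal 0 1) x) := by
  rw [measure_congr (Iio_ae_eq_Iic' (gamma_singleton x)), gamma_Iic]

lemma gamma_Ioi (x : ℝ) :
    gaussianReal 0 1 (Ioi x) = ENNReal.ofReal (cdf (gaussianReal 0 1) (-x)) := by
  have hmap : Measure.map (fun y : ℝ => -1 * y) (gaussianReal 0 1) = gaussianReal 0 1 := by
    rw [show (fun y : ℝ => -1 * y) = ((-1 : ℝ) * ·) from rfl, gaussianReal_map_const_mul,
      show (NNReal.mk ((-1:ℝ)^2) (sq_nonneg _) * 1 = 1) from NNReal.eq (by norm_num)]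
    norm_num
  calc gaussianReal 0 1 (Ioi x)
      = (Measure.map (fun y : ℝ => -1 * y) (gaussianReal 0 1)) (Ioi x) := by rw [hmap]
    _ = gaussianReal 0 1 ((fun y : ℝ => -1 * y) ⁻¹' (Ioi x)) :=
        Measure.map_apply (measurable_id.const_mul _) measurableSet_Ioi
    _ = gaussianReal 0 1 (Iio (-x)) := by
        congr 1
        ext y
        simp only [mem_preimage, mem_Ioi, mem_Iio]
        constructor <;> intro h <;> linarith
    _ = _ := gamma_Iio _

lemma real_core {σ Δ μ x y : ℝ} (hσ : 0 < σ) :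
    (|y + Δ - μ| < |x - μ|) ↔
      ((Δ / (Real.sqrt 2 * σ) < (Real.sqrt 2)⁻¹ * (σ⁻¹ * (x + -μ)) +
          -(Real.sqrt 2)⁻¹ * (σ⁻¹ * (y + -μ)) ∧
        -(Δ / (Real.sqrt 2 * σ)) < (Real.sqrt 2)⁻¹ * (σ⁻¹ * (x + -μ)) +
          (Real.sqrt 2)⁻¹ * (σ⁻¹ * (y + -μ))) ∨
       ((Real.sqrt 2)⁻¹ * (σ⁻¹ * (x + -μ)) + -(Real.sqrt 2)⁻¹ * (σ⁻¹ * (y + -μ))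
          < Δ / (Real.sqrt 2 * σ) ∧
        (Real.sqrt 2)⁻¹ * (σ⁻¹ * (x + -μ)) + (Real.sqrt 2)⁻¹ * (σ⁻¹ * (y + -μ))
          < -(Δ / (Real.sqrt 2 * σ)))) := by
  have hs2 : (0:ℝ) < Real.sqrt 2 := Real.sqrt_pos.mpr (by norm_num)
  have hw : (0:ℝ) < Real.sqrt 2 * σ := by positivity
  have e1 : (Real.sqrt 2)⁻¹ * (σ⁻¹ * (x + -μ)) + -(Real.sqrt 2)⁻¹ * (σ⁻¹ * (y + -μ))
      = ((x - μ) - (y + Δ - μ) + Δ) / (Real.sqrt 2 * σ) := by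
    field_simp
    ring
  have e2 : (Real.sqrt 2)⁻¹ * (σ⁻¹ * (x + -μ)) + (Real.sqrt 2)⁻¹ * (σ⁻¹ * (y + -μ))
      = ((x - μ) + (y + Δ - μ) - Δ) / (Real.sqrt 2 * σ) := by
    field_simp
    ring
  rw [e1, e2, show -(Δ / (Real.sqrt 2 * σ)) = (-Δ) / (Real.sqrt 2 * σ) from (neg_div _ _).symm,
    div_lt_div_iff_of_pos_right hw, div_lt_div_iff_of_pos_right hw,
    div_lt_div_iff_of_pos_right hw, div_lt_div_iff_of_pos_right hw]
  constructor
  · intro h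
    have h2 : (y + Δ - μ) ^ 2 < (x - μ) ^ 2 := sq_lt_sq.mpr h
    rcases mul_pos_iff.mp
        (show 0 < ((x - μ) - (y + Δ - μ)) * ((x - μ) + (y + Δ - μ)) by nlinarith) with
      ⟨h3, h4⟩ | ⟨h3, h4⟩
    · left; constructor <;> linarith
    · right; constructor <;> linarith
  · intro h
    have h2 : (y + Δ - μ) ^ 2 < (x - μ) ^ 2 := by
      rcases h with ⟨h3, h4⟩ | ⟨h3, h4⟩
      · nlinarith
      · nlinarith
    exact sq_lt_sq.mp h2

end SingleDimAux

open SingleDimAux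

theorem single_dim_detection_error_prob
    {Ω : Type*} [MeasurableSpace Ω] {P : Measure Ω} [IsProbabilityMeasure P]
    {X c' : Ω → ℝ} (hmX : Measurable X) (hmc : Measurable c')
    {μ σ Δ : ℝ} (hσ : 0 < σ)
    (hX : P.map X = gaussianReal μ ⟨σ ^ 2, sq_nonneg σ⟩)
    (hc : P.map c' = gaussianReal μ ⟨σ ^ 2, sq_nonneg σ⟩)
    (hind : IndepFun X c' P) :
    (P {ω | |c' ω + Δ - μ| < |X ω - μ|}).toReal =
      2 * cdf (gaussianReal 0 1) (Δ / (Real.sqrt 2 * σ)) *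
        cdf (gaussianReal 0 1) (-(Δ / (Real.sqrt 2 * σ))) := by
  have hσ' : σ ≠ 0 := hσ.ne'
  set b : ℝ := Δ / (Real.sqrt 2 * σ) with hb
  set g : ℝ → ℝ := fun x => σ⁻¹ * (x + -μ) with hgdef
  have hgm : Measurable g := (measurable_id.add_const _).const_mul _
  -- standardization
  have hmap : ∀ {Y : Ω → ℝ}, Measurable Y →
      P.map Y = gaussianReal μ ⟨σ ^ 2, sq_nonneg σ⟩ →
      P.map (fun ω => g (Y ω)) = gaussianReal 0 1 := by
    intro Y hmY hY
    have h1 : P.map (fun ω => g (Y ω)) = (P.map Y).map g := (Measure.map_map hgm hmY).symm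
    rw [h1, hY, hgdef,
      show (fun x : ℝ => σ⁻¹ * (x + -μ)) = ((σ⁻¹ * ·) ∘ (· + -μ)) from rfl,
      ← Measure.map_map (show Measurable fun x : ℝ => σ⁻¹ * x from measurable_id.const_mul _)
        (show Measurable fun x : ℝ => x + -μ from measurable_id.add_const _)]
    erw [gaussianReal_map_add_const, gaussianReal_map_const_mul]
    congr 1
    · simp
    · exact NNReal.eq (show σ⁻¹ ^ 2 * σ ^ 2 = (1:ℝ) by field_simp)
  set U : Ω → ℝ := fun ω => g (X ω) with hUdef
  set V : Ω → ℝ := fun ω => g (c' ω) with hVdef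
  have hU : P.map U = gaussianReal 0 1 := hmap hmX hX
  have hV : P.map V = gaussianReal 0 1 := hmap hmc hc
  have hUm : Measurable U := hgm.comp hmX
  have hVm : Measurable V := hgm.comp hmc
  have hindUV : IndepFun U V P := hind.comp hgm hgm
  have hjoint : P.map (fun ω => (U ω, V ω)) = (gaussianReal 0 1).prod (gaussianReal 0 1) := by
    rw [(indepFun_iff_map_prod_eq_prod_map_map hUm.aemeasurable hVm.aemeasurable).mp hindUV,
      hU, hV]
  -- event
  set E' : Set (ℝ × ℝ) := (Ioi b ×ˢ Ioi (-b)) ∪ (Iio b ×ˢ Iio (-b)) with hE'def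
  have hE'm : MeasurableSet E' :=
    (measurableSet_Ioi.prod measurableSet_Ioi).union (measurableSet_Iio.prod measurableSet_Iio)
  have hset : {ω | |c' ω + Δ - μ| < |X ω - μ|} = (fun ω => (U ω, V ω)) ⁻¹' (Lrot ⁻¹' E') := by
    ext ω
    simp only [mem_setOf_eq, mem_preimage, Lrot_apply, hE'def, mem_union, mem_prod, mem_Ioi,
      mem_Iio, hUdef, hVdef, hgdef]
    exact real_core hσ
  have hE'meas : ((gaussianReal 0 1).prod (gaussianReal 0 1)) E'
      = ENNReal.ofReal (2 * cdf (gaussianReal 0 1) b * cdf (gaussianReal 0 1) (-b)) := by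
    have hdisj : Disjoint (Ioi b ×ˢ Ioi (-b)) (Iio b ×ˢ Iio (-b)) := by
      rw [Set.disjoint_left]
      rintro p ⟨hp1, _⟩ ⟨hq1, _⟩
      exact absurd (show p.1 < b from hq1) (not_lt.mpr (le_of_lt hp1))
    rw [hE'def, measure_union hdisj (measurableSet_Iio.prod measurableSet_Iio),
      Measure.prod_prod, Measure.prod_prod, gamma_Ioi, gamma_Ioi, gamma_Iio, gamma_Iio, neg_neg,
      ← ENNReal.ofReal_mul (cdf_nonneg _ _), ← ENNReal.ofReal_mul (cdf_nonneg _ _),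
      ← ENNReal.ofReal_add (mul_nonneg (cdf_nonneg _ _) (cdf_nonneg _ _)) (mul_nonneg (cdf_nonneg _ _) (cdf_nonneg _ _))]
    congr 1
    ring
  rw [hset, ← Measure.map_apply (hUm.prodMk hVm) (Lrot_measurable hE'm), hjoint,
    gamma_prod_preimage hE'm, hE'meas,
    ENNReal.toReal_ofReal (mul_nonneg (mul_nonneg (by norm_num) (cdf_nonneg _ _)) (cdf_nonneg _ _))]
end

section
/- Let A be a finite nonempty index set, and for each i ∈ A let εᵢ^(1), εᵢ^(2) be mutually independent standard normal random variables, with constants Δᵢ ∈ ℝ (not all zero) and σᵢ > 0. Define the detection error probability P_Error = P(∑_{i∈A} (σᵢεᵢ^(2) + Δᵢ)² < ∑_{i∈A} (σᵢεᵢ^(1))²). Then P_Error ≤ 4·(∑_{i∈A} σᵢ²(σᵢ² + Δᵢ²)) / (∑_{i∈A} Δᵢ²)². -/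
open MeasureTheory ProbabilityTheory Real Filter
open scoped ENNReal NNReal

namespace MDEB


lemma integrable_pow_exp (k : ℕ) :
    Integrable (fun x : ℝ => x ^ k * Real.exp (-x ^ 2 / 2)) := by
  have hb : (0:ℝ) < 1/4 := by norm_num
  have hint : Integrable (fun x : ℝ => Real.exp (-(1/4) * x ^ 2)) :=
    integrable_exp_neg_mul_sq hb
  have heq : (fun x : ℝ => x ^ k * Real.exp (-x ^ 2 / 2))
      = fun x : ℝ => (x ^ k * Real.exp (-(1/4) * x ^ 2)) * Real.exp (-(1/4) * x ^ 2) := by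
    funext x
    rw [mul_assoc, ← Real.exp_add]
    ring_nf
  rw [heq]
  apply hint.bdd_mul
  · exact (continuous_pow k |>.mul (Real.continuous_exp.comp (by continuity))).aestronglyMeasurable
  · refine ae_of_all _ (fun x => ?_ : ∀ x : ℝ, ‖x ^ k * Real.exp (-(1/4) * x ^ 2)‖ ≤ 1 + 4 ^ k * k.factorial)
    rw [norm_mul, norm_pow, Real.norm_eq_abs, Real.norm_eq_abs,
      Real.abs_exp]
    rcases le_total |x| 1 with h | h
    · have h1 : |x| ^ k ≤ 1 := pow_le_one₀ (abs_nonneg x) h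
      have h2 : Real.exp (-(1/4) * x ^ 2) ≤ 1 := by
        rw [Real.exp_le_one_iff]; nlinarith [sq_nonneg x]
      nlinarith [pow_nonneg (abs_nonneg x) k, Real.exp_pos (-(1/4) * x ^ 2),
        pow_nonneg (by norm_num : (0:ℝ) ≤ 4) k, (Nat.cast_pos (α := ℝ)).mpr k.factorial_pos]
    · have h1 : |x| ^ k ≤ |x| ^ (2 * k) := pow_le_pow_right₀ h (by omega : k ≤ 2*k)
      have h2 : |x| ^ (2 * k) = (4 * (x^2/4)) ^ k := by
        rw [pow_mul, sq_abs]; ring_nf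
      have h3 : (x^2/4) ^ k ≤ k.factorial * Real.exp (x^2/4) := by
        have := Real.pow_div_factorial_le_exp (x := x^2/4) (by positivity) k
        rw [div_le_iff₀ (by positivity : (0:ℝ) < k.factorial)] at this
        linarith
      have h4 : |x| ^ k * Real.exp (-(1/4) * x ^ 2) ≤ 4 ^ k * k.factorial := by
        have he : Real.exp (-(1/4) * x ^ 2) = (Real.exp (x^2/4))⁻¹ := by
          rw [← Real.exp_neg]; ring_nf
        rw [he]
        calc |x| ^ k * (Real.exp (x^2/4))⁻¹
            ≤ (4 ^ k * ((x^2/4) ^ k)) * (Real.exp (x^2/4))⁻¹ := by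
              apply mul_le_mul_of_nonneg_right _ (by positivity)
              calc |x| ^ k ≤ |x| ^ (2*k) := h1
                _ = (4 * (x^2/4)) ^ k := h2
                _ = 4 ^ k * (x^2/4) ^ k := by rw [mul_pow]
          _ ≤ (4 ^ k * (k.factorial * Real.exp (x^2/4))) * (Real.exp (x^2/4))⁻¹ := by
              apply mul_le_mul_of_nonneg_right _ (by positivity)
              exact mul_le_mul_of_nonneg_left h3 (by positivity)
          _ = 4 ^ k * k.factorial := by
              rw [mul_assoc, mul_assoc, mul_inv_cancel₀ (Real.exp_pos _).ne', mul_one]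
      linarith

lemma hasDerivAt_aux (k : ℕ) (x : ℝ) :
    HasDerivAt (fun x : ℝ => -(x ^ (k+1)) * Real.exp (-x ^ 2 / 2))
      ((x ^ (k+2) - (k+1) * x ^ k) * Real.exp (-x ^ 2 / 2)) x := by
  have hexp : HasDerivAt (fun x : ℝ => Real.exp (-x ^ 2 / 2))
      (-x * Real.exp (-x ^ 2 / 2)) x := by
    have h := (((hasDerivAt_pow 2 x).neg).div_const 2).exp
    refine h.congr_deriv ?_
    show Real.exp (-x ^ 2 / 2) * (-((2:ℕ) * x ^ (2 - 1)) / 2) = -x * Real.exp (-x ^ 2 / 2)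
    simp
    ring
  have hpow : HasDerivAt (fun x : ℝ => -(x ^ (k+1)))
      (-((k+1) * x ^ k)) x := (hasDerivAt_pow (k+1) x).neg.congr_deriv (by push_cast; ring)
  have := hpow.mul hexp
  refine this.congr_deriv ?_
  push_cast
  ring

lemma gauss_int_rec (k : ℕ) :
    ∫ x : ℝ, x ^ (k+2) * Real.exp (-x ^ 2 / 2)
      = (k+1) * ∫ x : ℝ, x ^ k * Real.exp (-x ^ 2 / 2) := by
  have hzero : ∫ x : ℝ, ((x ^ (k+2) - (k+1) * x ^ k) * Real.exp (-x ^ 2 / 2)) = 0 := by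
    apply integral_eq_zero_of_hasDerivAt_of_integrable (hasDerivAt_aux k)
    · have : (fun x : ℝ => (x ^ (k+2) - (k+1) * x ^ k) * Real.exp (-x ^ 2 / 2))
          = fun x : ℝ => x ^ (k+2) * Real.exp (-x ^ 2 / 2)
            - (k+1) * (x ^ k * Real.exp (-x ^ 2 / 2)) := by
        funext x; ring
      rw [this]
      exact (integrable_pow_exp (k+2)).sub ((integrable_pow_exp k).const_mul _)
    · exact (integrable_pow_exp (k+1)).neg.congr (ae_of_all _ fun x => by simp [neg_mul])
  have hsplit : ∫ x : ℝ, ((x ^ (k+2) - (k+1) * x ^ k) * Real.exp (-x ^ 2 / 2))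
      = (∫ x : ℝ, x ^ (k+2) * Real.exp (-x ^ 2 / 2))
        - (k+1) * ∫ x : ℝ, x ^ k * Real.exp (-x ^ 2 / 2) := by
    rw [← integral_const_mul, ← integral_sub (integrable_pow_exp (k+2))
      ((integrable_pow_exp k).const_mul _)]
    congr 1; funext x; ring
  rw [hsplit] at hzero
  linarith

lemma gauss_int_zero : ∫ x : ℝ, x ^ 0 * Real.exp (-x ^ 2 / 2) = √(2 * π) := by
  have h := integral_gaussian (1/2)
  rw [show √(π / (1/2)) = √(2*π) by norm_num [mul_comm]] at h
  rw [← h]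
  congr 1; funext x; rw [pow_zero, one_mul]; ring_nf

lemma gauss_int_odd (k : ℕ) : ∫ x : ℝ, x ^ (2*k+1) * Real.exp (-x ^ 2 / 2) = 0 := by
  have h := integral_neg_eq_self (fun x : ℝ => x ^ (2*k+1) * Real.exp (-x ^ 2 / 2)) volume
  have h2 : (∫ x : ℝ, (-x) ^ (2*k+1) * Real.exp (-(-x) ^ 2 / 2))
      = - ∫ x : ℝ, x ^ (2*k+1) * Real.exp (-x ^ 2 / 2) := by
    rw [← integral_neg]
    congr 1; funext x
    rw [Odd.neg_pow ⟨k, by ring⟩, neg_sq]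
    ring
  rw [h2] at h
  linarith

lemma gauss_int_two : ∫ x : ℝ, x ^ 2 * Real.exp (-x ^ 2 / 2) = √(2 * π) := by
  have := gauss_int_rec 0
  rw [gauss_int_zero] at this
  simpa using this

lemma gauss_int_four : ∫ x : ℝ, x ^ 4 * Real.exp (-x ^ 2 / 2) = 3 * √(2 * π) := by
  have := gauss_int_rec 2
  rw [gauss_int_two] at this
  norm_num at this
  rw [show √(2*π) = √2*√π from Real.sqrt_mul (by norm_num) π]
  linarith

lemma pdf_eq (x : ℝ) : gaussianPDFReal 0 1 x = (√(2 * π))⁻¹ * Real.exp (-x ^ 2 / 2) := by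
  simp [gaussianPDFReal]

lemma gaussian_integrable_pow (k : ℕ) :
    Integrable (fun x : ℝ => x ^ k) (gaussianReal 0 1) := by
  rw [gaussianReal_of_var_ne_zero 0 one_ne_zero,
    integrable_withDensity_iff (measurable_gaussianPDF 0 1)
      (ae_of_all _ fun x => ENNReal.ofReal_lt_top)]
  have : (fun x : ℝ => x ^ k * (gaussianPDF 0 1 x).toReal)
      = fun x : ℝ => (√(2 * π))⁻¹ * (x ^ k * Real.exp (-x ^ 2 / 2)) := by
    funext x
    rw [gaussianPDF, ENNReal.toReal_ofReal (gaussianPDFReal_nonneg 0 1 x), pdf_eq]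
    ring
  rw [this]
  exact (integrable_pow_exp k).const_mul _

lemma gaussian_integral_pow (k : ℕ) :
    ∫ x, x ^ k ∂(gaussianReal 0 1)
      = (√(2 * π))⁻¹ * ∫ x : ℝ, x ^ k * Real.exp (-x ^ 2 / 2) := by
  rw [gaussianReal_of_var_ne_zero 0 one_ne_zero]
  have hd : gaussianPDF 0 1 = fun x => ((gaussianPDFReal 0 1 x).toNNReal : ℝ≥0∞) := rfl
  rw [hd, integral_withDensity_eq_integral_smul
    ((measurable_gaussianPDFReal 0 1).real_toNNReal) (fun x : ℝ => x ^ k)]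
  rw [← integral_const_mul]
  congr 1; funext x
  rw [NNReal.smul_def, Real.coe_toNNReal _ (gaussianPDFReal_nonneg 0 1 x), pdf_eq]
  simp [smul_eq_mul]
  ring

lemma gaussian_pow_one : ∫ x, x ^ 1 ∂(gaussianReal 0 1) = 0 := by
  rw [gaussian_integral_pow, (by simpa using gauss_int_odd 0 : ∫ x : ℝ, x ^ 1 * Real.exp (-x ^ 2 / 2) = 0), mul_zero]

lemma gaussian_pow_two : ∫ x, x ^ 2 ∂(gaussianReal 0 1) = 1 := by
  rw [gaussian_integral_pow, gauss_int_two,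
    inv_mul_cancel₀ (Real.sqrt_ne_zero'.mpr (by positivity))]

lemma gaussian_pow_three : ∫ x, x ^ 3 ∂(gaussianReal 0 1) = 0 := by
  rw [gaussian_integral_pow, show (3:ℕ) = 2*1+1 by norm_num, gauss_int_odd, mul_zero]

lemma gaussian_pow_four : ∫ x, x ^ 4 ∂(gaussianReal 0 1) = 3 := by
  rw [gaussian_integral_pow, gauss_int_four, mul_comm (3:ℝ), ← mul_assoc,
    inv_mul_cancel₀ (Real.sqrt_ne_zero'.mpr (by positivity)), one_mul]



lemma nu_int_poly (a b : ℝ) (k : ℕ) :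
    Integrable (fun x : ℝ => (a * x + b) ^ k) (gaussianReal 0 1) := by
  have h : (fun x : ℝ => (a * x + b) ^ k)
      = fun x => ∑ i ∈ Finset.range (k+1), (a ^ i * b ^ (k-i) * (k.choose i)) * x ^ i := by
    funext x
    rw [add_pow]
    apply Finset.sum_congr rfl
    intro i _
    ring
  rw [h]
  exact integrable_finset_sum _ (fun i _ => (gaussian_integrable_pow i).const_mul _)

lemma nu_sq (a b : ℝ) :
    ∫ x, (a * x + b) ^ 2 ∂(gaussianReal 0 1) = a ^ 2 + b ^ 2 := by
  have h : (fun x : ℝ => (a * x + b) ^ 2)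
      = fun x => a ^ 2 * x ^ 2 + ((2*a*b) * x ^ 1 + b ^ 2 * x ^ 0) := by
    funext x; ring
  have i1 : Integrable (fun x : ℝ => 2*a*b * x ^ 1 + b ^ 2 * x ^ 0) (gaussianReal 0 1) :=
    ((gaussian_integrable_pow 1).const_mul _).add ((gaussian_integrable_pow 0).const_mul _)
  rw [h, integral_add ((gaussian_integrable_pow 2).const_mul _) i1,
    integral_add ((gaussian_integrable_pow 1).const_mul _) ((gaussian_integrable_pow 0).const_mul _),
    integral_const_mul, integral_const_mul, integral_const_mul,
    gaussian_pow_one, gaussian_pow_two]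
  simp

lemma nu_quart (a b : ℝ) :
    ∫ x, (a * x + b) ^ 4 ∂(gaussianReal 0 1)
      = 3 * a ^ 4 + 6 * a ^ 2 * b ^ 2 + b ^ 4 := by
  have h : (fun x : ℝ => (a * x + b) ^ 4)
      = fun x => a ^ 4 * x ^ 4 + ((4*a^3*b) * x ^ 3 + ((6*a^2*b^2) * x ^ 2
          + ((4*a*b^3) * x ^ 1 + b ^ 4 * x ^ 0))) := by
    funext x; ring
  have i0 : Integrable (fun x : ℝ => 4*a*b^3 * x ^ 1 + b ^ 4 * x ^ 0) (gaussianReal 0 1) :=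
    ((gaussian_integrable_pow 1).const_mul _).add ((gaussian_integrable_pow 0).const_mul _)
  have i1 : Integrable (fun x : ℝ => 6*a^2*b^2 * x ^ 2 + (4*a*b^3 * x ^ 1 + b ^ 4 * x ^ 0))
      (gaussianReal 0 1) := ((gaussian_integrable_pow 2).const_mul _).add i0
  have i2 : Integrable (fun x : ℝ => 4*a^3*b * x ^ 3 + (6*a^2*b^2 * x ^ 2
      + (4*a*b^3 * x ^ 1 + b ^ 4 * x ^ 0))) (gaussianReal 0 1) :=
    ((gaussian_integrable_pow 3).const_mul _).add i1
  rw [h, integral_add ((gaussian_integrable_pow 4).const_mul _) i2,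
    integral_add ((gaussian_integrable_pow 3).const_mul _) i1,
    integral_add ((gaussian_integrable_pow 2).const_mul _) i0,
    integral_add ((gaussian_integrable_pow 1).const_mul _) ((gaussian_integrable_pow 0).const_mul _),
    integral_const_mul, integral_const_mul, integral_const_mul, integral_const_mul,
    integral_const_mul, gaussian_pow_one, gaussian_pow_two, gaussian_pow_three,
    gaussian_pow_four]
  simp
  ring

variable {Ω : Type*} [MeasurableSpace Ω] {P : Measure Ω} [IsProbabilityMeasure P]

lemma aemeas_of_map {X : Ω → ℝ} (hmap : P.map X = gaussianReal 0 1) :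
    AEMeasurable X P := by
  by_contra h
  rw [Measure.map_of_not_aemeasurable h] at hmap
  have := congrArg (fun μ : Measure ℝ => μ Set.univ) hmap
  simp at this

lemma P_integrable_poly {X : Ω → ℝ} (hmap : P.map X = gaussianReal 0 1)
    (a b : ℝ) (k : ℕ) : Integrable (fun ω => (a * X ω + b) ^ k) P := by
  have hX := aemeas_of_map hmap
  have hg : AEStronglyMeasurable (fun x : ℝ => (a * x + b) ^ k) (P.map X) :=
    (by continuity : Continuous fun x : ℝ => (a * x + b) ^ k).aestronglyMeasurable
  have := (integrable_map_measure hg hX).mp (by rw [hmap]; exact nu_int_poly a b k)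
  exact this

lemma P_exp_sq {X : Ω → ℝ} (hmap : P.map X = gaussianReal 0 1) (a b : ℝ) :
    ∫ ω, (a * X ω + b) ^ 2 ∂P = a ^ 2 + b ^ 2 := by
  have hX := aemeas_of_map hmap
  have hg : AEStronglyMeasurable (fun x : ℝ => (a * x + b) ^ 2) (P.map X) :=
    (by continuity : Continuous fun x : ℝ => (a * x + b) ^ 2).aestronglyMeasurable
  rw [← integral_map hX hg, hmap, nu_sq]

lemma P_exp_quart {X : Ω → ℝ} (hmap : P.map X = gaussianReal 0 1) (a b : ℝ) :
    ∫ ω, (a * X ω + b) ^ 4 ∂P = 3 * a ^ 4 + 6 * a ^ 2 * b ^ 2 + b ^ 4 := by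
  have hX := aemeas_of_map hmap
  have hg : AEStronglyMeasurable (fun x : ℝ => (a * x + b) ^ 4) (P.map X) :=
    (by continuity : Continuous fun x : ℝ => (a * x + b) ^ 4).aestronglyMeasurable
  rw [← integral_map hX hg, hmap, nu_quart]

lemma P_memLp_sq {X : Ω → ℝ} (hmap : P.map X = gaussianReal 0 1) (a b : ℝ) :
    MemLp (fun ω => (a * X ω + b) ^ 2) 2 P := by
  have hX := aemeas_of_map hmap
  have hm : AEStronglyMeasurable (fun ω => (a * X ω + b) ^ 2) P :=
    (((aemeasurable_const.mul hX).add aemeasurable_const).pow_const 2).aestronglyMeasurable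
  rw [memLp_two_iff_integrable_sq hm]
  have : (fun ω => ((a * X ω + b) ^ 2) ^ 2) = fun ω => (a * X ω + b) ^ 4 := by
    funext ω; ring
  rw [this]
  exact P_integrable_poly hmap a b 4

/-- variance of `(a X + b)^2` where `X` is standard gaussian. -/
lemma P_variance_sq {X : Ω → ℝ} (hmap : P.map X = gaussianReal 0 1) (a b : ℝ) :
    variance (fun ω => (a * X ω + b) ^ 2) P = 2 * a ^ 4 + 4 * a ^ 2 * b ^ 2 := by
  rw [variance_eq_sub (P_memLp_sq hmap a b)]
  have h1 : (fun ω => (a * X ω + b) ^ 2) ^ 2 = fun ω => (a * X ω + b) ^ 4 := by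
    funext ω; simp [pow_mul]; ring
  rw [h1, P_exp_quart hmap, P_exp_sq hmap]
  ring


variable {Ω : Type*} [MeasurableSpace Ω] {P : Measure Ω} [IsProbabilityMeasure P]

lemma P_variance_sq_neg {X : Ω → ℝ} (hmap : P.map X = gaussianReal 0 1) (a b : ℝ) :
    variance (fun ω => -((a * X ω + b) ^ 2)) P = 2 * a ^ 4 + 4 * a ^ 2 * b ^ 2 := by
  have h := variance_const_mul (-1) (fun ω => (a * X ω + b) ^ 2) P
  simp only [neg_one_mul] at h
  rw [h, P_variance_sq hmap]
  ring


end MDEB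

open MDEB


theorem multidim_detection_error_bound
    {Ω : Type*} [MeasurableSpace Ω] {P : Measure Ω} [IsProbabilityMeasure P]
    {ι : Type*} (A : Finset ι) (hA : A.Nonempty)
    (ε₁ ε₂ : ι → Ω → ℝ) (Δ σ : ι → ℝ)
    (hσ : ∀ i ∈ A, 0 < σ i)
    (hΔ : ∃ i ∈ A, Δ i ≠ 0)
    (hg₁ : ∀ i ∈ A, P.map (ε₁ i) = gaussianReal 0 1)
    (hg₂ : ∀ i ∈ A, P.map (ε₂ i) = gaussianReal 0 1)
    (hind : iIndepFun
      (Sum.elim ε₁ ε₂) P) :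
    (P {ω | ∑ i ∈ A, (σ i * ε₂ i ω + Δ i) ^ 2 < ∑ i ∈ A, (σ i * ε₁ i ω) ^ 2}).toReal
      ≤ 4 * (∑ i ∈ A, (σ i) ^ 2 * ((σ i) ^ 2 + (Δ i) ^ 2)) / (∑ i ∈ A, (Δ i) ^ 2) ^ 2 := by
  classical
  set m : ℝ := ∑ i ∈ A, (Δ i) ^ 2 with hm_def
  have hm : 0 < m := by
    obtain ⟨i₀, hi₀, hΔ0⟩ := hΔ
    exact Finset.sum_pos' (fun i _ => sq_nonneg _) ⟨i₀, hi₀, by positivity⟩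
  -- the family of summands
  set g : ι ⊕ ι → ℝ → ℝ :=
    Sum.elim (fun i x => -((σ i * x + 0) ^ 2)) (fun i x => (σ i * x + Δ i) ^ 2) with hg_def
  have hgm : ∀ j, Measurable (g j) := by
    rintro (i | i) <;> simp only [hg_def, Sum.elim_inl, Sum.elim_inr] <;> fun_prop
  set W : ι ⊕ ι → Ω → ℝ := fun j => g j ∘ (Sum.elim ε₁ ε₂ j) with hW_def
  have hindW : iIndepFun W P :=
    hind.comp g hgm
  set S : Finset (ι ⊕ ι) := A.disjSum A with hS_def
  -- MemLp facts
  have hmem : ∀ j ∈ S, MemLp (W j) 2 P := by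
    rintro (i | i) hj
    · have hi : i ∈ A := by simpa [hS_def] using hj
      exact (P_memLp_sq (hg₁ i hi) (σ i) 0).neg
    · have hi : i ∈ A := by simpa [hS_def] using hj
      exact P_memLp_sq (hg₂ i hi) (σ i) (Δ i)
  have hYmem : MemLp (∑ j ∈ S, W j) 2 P := memLp_finset_sum' _ hmem
  -- expectation of the sum
  have hEW : ∀ j ∈ S, ∫ ω, W j ω ∂P = Sum.elim (fun i => -(σ i ^ 2))
      (fun i => σ i ^ 2 + Δ i ^ 2) j := by
    rintro (i | i) hj
    · have hi : i ∈ A := by simpa [hS_def] using hj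
      have : ∫ ω, W (Sum.inl i) ω ∂P = -∫ ω, (σ i * ε₁ i ω + 0) ^ 2 ∂P := by
        rw [← integral_neg]; rfl
      rw [this, P_exp_sq (hg₁ i hi)]
      simp
    · have hi : i ∈ A := by simpa [hS_def] using hj
      have : ∫ ω, W (Sum.inr i) ω ∂P = ∫ ω, (σ i * ε₂ i ω + Δ i) ^ 2 ∂P := rfl
      rw [this, P_exp_sq (hg₂ i hi)]
      simp
  have hEY : ∫ ω, (∑ j ∈ S, W j) ω ∂P = m := by
    have h1 : ∫ ω, (∑ j ∈ S, W j) ω ∂P = ∑ j ∈ S, ∫ ω, W j ω ∂P := by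
      simp only [Finset.sum_apply]
      exact integral_finset_sum S (fun j hj => (hmem j hj).integrable one_le_two)
    rw [h1, Finset.sum_congr rfl hEW, Finset.sum_disjSum]
    rw [← Finset.sum_add_distrib]
    simp only [Sum.elim_inl, Sum.elim_inr, hm_def]
    apply Finset.sum_congr rfl
    intro i _
    ring
  -- variance of the sum
  have hVarW : ∀ j ∈ S, variance (W j) P = Sum.elim (fun i => 2 * σ i ^ 4)
      (fun i => 2 * σ i ^ 4 + 4 * σ i ^ 2 * Δ i ^ 2) j := by
    rintro (i | i) hj
    · have hi : i ∈ A := by simpa [hS_def] using hj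
      have h := P_variance_sq_neg (hg₁ i hi) (σ i) 0
      simp only [Sum.elim_inl]
      rw [show W (Sum.inl i) = fun ω => -((σ i * ε₁ i ω + 0) ^ 2) from rfl, h]
      ring
    · have hi : i ∈ A := by simpa [hS_def] using hj
      exact P_variance_sq (hg₂ i hi) (σ i) (Δ i)
  have hVarY : variance (∑ j ∈ S, W j) P = ∑ i ∈ A, 4 * σ i ^ 2 * (σ i ^ 2 + Δ i ^ 2) := by
    rw [IndepFun.variance_sum hmem
      (fun j _ j' _ hne => hindW.indepFun hne)]
    rw [Finset.sum_congr rfl hVarW, Finset.sum_disjSum, ← Finset.sum_add_distrib]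
    apply Finset.sum_congr rfl
    intro i _
    simp only [Sum.elim_inl, Sum.elim_inr]
    ring
  -- Chebyshev
  have hcheb := meas_ge_le_variance_div_sq (μ := P) hYmem hm
  -- event inclusion
  have hsub : {ω | ∑ i ∈ A, (σ i * ε₂ i ω + Δ i) ^ 2 < ∑ i ∈ A, (σ i * ε₁ i ω) ^ 2}
      ⊆ {ω | m ≤ |(∑ j ∈ S, W j) ω - ∫ ω, (∑ j ∈ S, W j) ω ∂P|} := by
    intro ω hω
    simp only [Set.mem_setOf_eq] at hω ⊢
    rw [hEY]
    have hYval : (∑ j ∈ S, W j) ω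
        = ∑ i ∈ A, (σ i * ε₂ i ω + Δ i) ^ 2 - ∑ i ∈ A, (σ i * ε₁ i ω) ^ 2 := by
      simp only [Finset.sum_apply, hS_def, Finset.sum_disjSum]
      have hl : ∀ i ∈ A, W (Sum.inl i) ω = -((σ i * ε₁ i ω) ^ 2) := by
        intro i _; simp [hW_def, hg_def]
      have hr : ∀ i ∈ A, W (Sum.inr i) ω = (σ i * ε₂ i ω + Δ i) ^ 2 := by
        intro i _; simp [hW_def, hg_def]
      rw [Finset.sum_congr rfl hl, Finset.sum_congr rfl hr, Finset.sum_neg_distrib]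
      ring
    rw [hYval]
    have hneg : (∑ i ∈ A, (σ i * ε₂ i ω + Δ i) ^ 2 - ∑ i ∈ A, (σ i * ε₁ i ω) ^ 2) < 0 :=
      sub_neg.mpr hω
    rw [abs_of_nonpos (by linarith)]
    linarith
  -- putting it together
  have hPle : P {ω | ∑ i ∈ A, (σ i * ε₂ i ω + Δ i) ^ 2 < ∑ i ∈ A, (σ i * ε₁ i ω) ^ 2}
      ≤ ENNReal.ofReal (variance (∑ j ∈ S, W j) P / m ^ 2) :=
    le_trans (measure_mono hsub) hcheb
  have hfinal := ENNReal.toReal_mono ENNReal.ofReal_ne_top hPle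
  rw [ENNReal.toReal_ofReal (div_nonneg (variance_nonneg _ _) (by positivity))] at hfinal
  refine le_trans hfinal ?_
  rw [hVarY]
  apply le_of_eq
  rw [Finset.mul_sum]
  congr 1
  apply Finset.sum_congr rfl
  intro i _
  ring
end
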